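/- (Main theorem, case K = ℚ.) For a rational number x, write x = p/q in lowest terms with q > 0 and define the height h(x) = max(|p|, q). For R ≥ 1 let D(R) = {x ∈ ℚ : |x| ≤ 2 and h(x) ≤ R}, and let N(R) = {x ∈ D(R) : the polynomial X³ − 3X − x is reducible (not irreducible) over ℚ}. Then there exist a constant C > 0 and R₀ ≥ 1 such that for all R ≥ R₀, card N(R) ≤ C · R^{−4/3} · card D(R). -/

import Mathlib

open Polynomial

/-- The height of a rational number `x = p/q` in lowest terms (`q > 0`):
`h(x) = max(|p|, q)`. -/
def ratHeight (x : ℚ) : ℕ := max x.num.natAbs x.den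

/-- `Dset R` is the set of rationals of absolute value at most `2` and height at most `R`. -/
def Dset (R : ℝ) : Set ℚ := {x | |x| ≤ 2 ∧ (ratHeight x : ℝ) ≤ R}

/-- `Nset R` is the set of trisection numbers in `Dset R`: those `x` for which
`X³ - 3X - x` is reducible over `ℚ`. -/
def Nset (R : ℝ) : Set ℚ :=
  {x ∈ Dset R | ¬ Irreducible (X ^ 3 - 3 * X - C x : Polynomial ℚ)}

/-! A reducible `X³ - 3X - x` has a rational root `t`, and `|x| ≤ 2` gives `|t| ≤ 2`. Writing
`t = a / b` in lowest terms, `x = (a³ - 3ab²) / b³` is again in lowest terms, so `h(x) ≤ R`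
forces `b ≤ R^(1/3)` and `|a| ≤ 2b`: there are `O(R^(2/3))` trisection numbers.

On the other hand `D(R)` contains every reduced fraction `a / q` with `1 ≤ a ≤ q ≤ m = ⌊R⌋`.
Reducing the `m(m+1)/2` pairs `(q, a)` hits the reduced fraction with denominator `d` at most
`m / d` times; fractions with `d ≤ m / 4` absorb at most `m² / 4` pairs, all others at most
three each, so there are at least `m² / 12` reduced fractions. -/

open Finset

lemma exists_cube_sub_three_mul_eq_of_not_irreducible {K : Type*} [Field K] {x : K}
    (h : ¬ Irreducible (X ^ 3 - 3 * X - C x : K[X])) : ∃ t : K, t ^ 3 - 3 * t = x := by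
  have hdeg : (X ^ 3 - 3 * X - C x : K[X]).natDegree = 3 := by compute_degree!
  rw [irreducible_iff_roots_eq_zero_of_degree_le_three (by omega) hdeg.le] at h
  obtain ⟨t, ht⟩ := Multiset.exists_mem_of_ne_zero h
  refine ⟨t, sub_eq_zero.1 ?_⟩
  simpa using isRoot_of_mem_roots ht

lemma abs_le_two_of_abs_cube_sub_three_mul_le_two {K : Type*} [Field K] [LinearOrder K]
    [IsStrictOrderedRing K] {t : K} (h : |t ^ 3 - 3 * t| ≤ 2) : |t| ≤ 2 := by
  rw [abs_le] at *
  constructor <;> nlinarith [sq_nonneg (t + 1), sq_nonneg (t - 1)]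

lemma isCoprime_cube_sub_three_mul_mul_sq_cube {R : Type*} [CommRing R] {a b : R}
    (h : IsCoprime a b) :    IsCoprime (a ^ 3 - 3 * a * b ^ 2) (b ^ 3) := by
  have h' : IsCoprime (a ^ 3 + b * (-3 * a * b)) b := h.pow_left.add_mul_left_left _
  exact (by ring : a ^ 3 + b * (-3 * a * b) = a ^ 3 - 3 * a * b ^ 2) ▸ h'.pow_right

lemma Rat.den_cube_sub_three_mul (t : ℚ) : (t ^ 3 - 3 * t).den = t.den ^ 3 := by
  have hb : (0 : ℤ) < t.den := by exact_mod_cast t.pos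
  have hcop : IsCoprime t.num t.den := Int.isCoprime_iff_gcd_eq_one.2 t.reduced
  have hx : t ^ 3 - 3 * t =
      ((t.num ^ 3 - 3 * t.num * t.den ^ 2 : ℤ) : ℚ) / ((t.den ^ 3 : ℤ) : ℚ) := by
    nth_rw 1 2 [← Rat.num_div_den t]
    push_cast
    field_simp
  rw [← Nat.cast_inj (R := ℤ), hx, Rat.den_div_eq_of_coprime (by positivity)
    (Int.isCoprime_iff_gcd_eq_one.1 (isCoprime_cube_sub_three_mul_mul_sq_cube hcop))]
  push_cast
  ring

lemma Rat.mem_image_div_of_abs_num_le_of_den_le {t : ℚ} {A : ℤ} {B : ℕ} (hA : |t.num| ≤ A)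
    (hB : t.den ≤ B) :
    t ∈ (Icc (-A) A ×ˢ Icc 1 B).image fun p : ℤ × ℕ => (p.1 / p.2 : ℚ) :=
  mem_image.2 ⟨(t.num, t.den),
    mem_product.2 ⟨mem_Icc.2 (abs_le.1 hA), mem_Icc.2 ⟨t.pos, hB⟩⟩, Rat.num_div_den t⟩

lemma card_Nset_le_of_lt_pow_three {R : ℝ} {B : ℕ} (hRB : R < (B + 1) ^ 3) :
    Nat.card (Nset R) ≤ (4 * B + 1) * B := by
  set box := Icc (-(2 * B : ℤ)) (2 * B) ×ˢ Icc 1 B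
  have hsub :
      Nset R ⊆ ↑(box.image fun p : ℤ × ℕ => (p.1 / p.2 : ℚ) ^ 3 - 3 * (p.1 / p.2)) := by
    rintro x ⟨hxD, hxN⟩
    obtain ⟨t, rfl⟩ := exists_cube_sub_three_mul_eq_of_not_irreducible hxN
    have hden : t.den ≤ B := by
      have : ((t.den ^ 3 : ℕ) : ℝ) < (B + 1) ^ 3 := by
        rw [← Rat.den_cube_sub_three_mul]
        exact (Nat.cast_le.2 (le_max_right _ _)).trans_lt (hxD.2.trans_lt hRB)
      push_cast at this
      exact Nat.lt_add_one_iff.1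
        (by exact_mod_cast lt_of_pow_lt_pow_left₀ 3 (by positivity) this)
    have hnum : |t.num| ≤ 2 * B := by
      have habs : |(t.num : ℚ)| ≤ 2 * t.den := by
        rw [← Rat.mul_den_eq_num, abs_mul, Nat.abs_cast]
        exact mul_le_mul_of_nonneg_right (abs_le_two_of_abs_cube_sub_three_mul_le_two hxD.1)
          (Nat.cast_nonneg _)
      have : |t.num| ≤ 2 * t.den := by exact_mod_cast habs
      omega
    obtain ⟨p, hp, rfl⟩ := mem_image.1 (Rat.mem_image_div_of_abs_num_le_of_den_le hnum hden)
    exact mem_image_of_mem _ hp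
  calc Nat.card (Nset R) ≤ #(box.image _) := by
        rw [← Nat.card_eq_finsetCard]; exact Nat.card_mono (Finset.finite_toSet _) hsub
    _ ≤ #box := card_image_le
    _ = (4 * B + 1) * B := by
      simp only [box, card_product, Int.card_Icc, sub_neg_eq_add, Nat.card_Icc,
        add_tsub_cancel_right, mul_eq_mul_right_iff]
      omega

lemma card_Nset_le {R : ℝ} (hR : 1 ≤ R) : (Nat.card (Nset R) : ℝ) ≤ 5 * R ^ (2 / 3 : ℝ) := by
  set ρ := R ^ (3⁻¹ : ℝ)
  set B := ⌊ρ⌋₊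
  have hρ : 1 ≤ ρ := Real.one_le_rpow hR (by norm_num)
  have hρ3 : ρ ^ 3 = R := by
    simpa using Real.rpow_inv_natCast_pow (by linarith) (by norm_num : 3 ≠ 0)
  have hρ2 : ρ ^ 2 = R ^ (2 / 3 : ℝ) := by
    rw [← Real.rpow_natCast, ← Real.rpow_mul (by linarith)]
    norm_num
  have hRB : R < (B + 1) ^ 3 :=
    hρ3 ▸ pow_lt_pow_left₀ (Nat.lt_floor_add_one ρ) (by linarith) (by norm_num)
  have hcard : (Nat.card (Nset R) : ℝ) ≤ (4 * B + 1) * B := by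
    exact_mod_cast card_Nset_le_of_lt_pow_three hRB
  have hBρ : (B : ℝ) ≤ ρ := Nat.floor_le (by linarith)
  have hB : (1 : ℝ) ≤ B := Nat.one_le_cast.2 (Nat.le_floor (by simpa using hρ))
  rw [← hρ2]
  nlinarith

/-- The pair `(q, a)` stands for the fraction `a / q`. -/
def properFractions (m : ℕ) : Finset (ℕ × ℕ) :=
  (Icc 1 m ×ˢ Icc 1 m).filter fun s => s.2 ≤ s.1

def reducedFractions (m : ℕ) : Finset (ℕ × ℕ) :=
  (properFractions m).filter fun s => s.1.Coprime s.2

lemma mem_properFractions {m : ℕ} {s : ℕ × ℕ} :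
    s ∈ properFractions m ↔ s.1 ∈ Icc 1 m ∧ s.2 ∈ Icc 1 s.1 := by
  simp only [properFractions, mem_filter, mem_product, mem_Icc]
  omega

lemma sum_properFractions {M : Type*} [AddCommMonoid M] (m : ℕ) (f : ℕ × ℕ → M) :
    ∑ s ∈ properFractions m, f s = ∑ q ∈ Icc 1 m, ∑ a ∈ Icc 1 q, f (q, a) :=
  sum_finset_product _ _ _ fun _ => mem_properFractions

lemma card_properFractions_mul_two (m : ℕ) : #(properFractions m) * 2 = m * (m + 1) := by
  rw [card_eq_sum_ones, sum_properFractions]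
  induction m with
  | zero => rfl
  | succ n ih =>
    rw [sum_Icc_succ_top (by omega), add_mul, ih, sum_const, Nat.card_Icc,
      add_tsub_cancel_right, smul_eq_mul, mul_one]
    ring

lemma sum_properFractions_div_le (m K : ℕ) : ∑ s ∈ properFractions K, m / s.1 ≤ K * m := by
  rw [sum_properFractions]
  calc ∑ q ∈ Icc 1 K, ∑ _a ∈ Icc 1 q, m / q ≤ ∑ _q ∈ Icc 1 K, m := by
        refine sum_le_sum fun q _ => ?_
        rw [sum_const, Nat.card_Icc, Nat.add_sub_cancel, smul_eq_mul]
        exact Nat.mul_div_le m q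
    _ = K * m := by simp

def reduceFraction (s : ℕ × ℕ) : ℕ × ℕ := (s.1 / s.1.gcd s.2, s.2 / s.1.gcd s.2)

lemma reduceFraction_mem {m : ℕ} {s : ℕ × ℕ} (hs : s ∈ properFractions m) :
    reduceFraction s ∈ reducedFractions m := by
  rw [mem_properFractions, mem_Icc, mem_Icc] at hs
  have hg : 0 < s.1.gcd s.2 := Nat.gcd_pos_of_pos_left _ (by omega)
  simp only [reducedFractions, mem_filter, mem_properFractions, reduceFraction, mem_Icc]
  refine ⟨⟨⟨?_, ?_⟩, ?_, Nat.div_le_div_right hs.2.2⟩, Nat.coprime_div_gcd_div_gcd hg⟩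
  · exact (Nat.one_le_div_iff hg).2 (Nat.gcd_le_left _ (by omega))
  · exact (Nat.div_le_self _ _).trans hs.1.2
  · exact (Nat.one_le_div_iff hg).2 (Nat.gcd_le_right _ (by omega))

lemma card_fiber_reduceFraction_le {m : ℕ} (p : ℕ × ℕ) :
    #{s ∈ properFractions m | reduceFraction s = p} ≤ m / p.1 := by
  calc _ ≤ #((Icc 1 (m / p.1)).image fun k => (k * p.1, k * p.2)) := by
        refine card_le_card fun s hs => ?_
        rw [mem_filter, mem_properFractions, mem_Icc, mem_Icc] at hs
        obtain ⟨⟨hq, ha⟩, rfl⟩ := hs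
        set g := s.1.gcd s.2
        have hg : 0 < g := Nat.gcd_pos_of_pos_left _ (by omega)
        have hq' : s.1 / g * g = s.1 := Nat.div_mul_cancel (Nat.gcd_dvd_left _ _)
        have ha' : s.2 / g * g = s.2 := Nat.div_mul_cancel (Nat.gcd_dvd_right _ _)
        refine mem_image.2 ⟨g, mem_Icc.2 ⟨hg, ?_⟩, ?_⟩
        · simp only [reduceFraction]
          rw [Nat.le_div_iff_mul_le (Nat.div_pos (Nat.gcd_le_left _ (by omega)) hg), mul_comm,
            hq']
          exact hq.2
        · simp only [reduceFraction]
          rw [mul_comm g, mul_comm g, hq', ha']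
    _ ≤ m / p.1 := card_image_le.trans (by simp)

lemma card_properFractions_le_sum (m : ℕ) :
    #(properFractions m) ≤ ∑ p ∈ reducedFractions m, m / p.1 := by
  rw [card_eq_sum_card_fiberwise fun s hs => reduceFraction_mem hs]
  exact sum_le_sum fun p _ => card_fiber_reduceFraction_le p

lemma mul_self_le_twelve_mul_card_reducedFractions (m : ℕ) :
    m * m ≤ 12 * #(reducedFractions m) := by
  set K := m / 4
  have hsmall : ∑ p ∈ reducedFractions m with p.1 ≤ K, m / p.1 ≤ K * m := by
    refine le_trans (sum_le_sum_of_subset fun p hp => ?_) (sum_properFractions_div_le m K)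
    simp only [reducedFractions, mem_filter, mem_properFractions, mem_Icc] at hp ⊢
    omega
  have hlarge :
      ∑ p ∈ reducedFractions m with ¬ p.1 ≤ K, m / p.1 ≤ #(reducedFractions m) * 3 := by
    refine (sum_le_card_nsmul _ _ 3 fun p hp => ?_).trans
      (Nat.mul_le_mul_right _ (card_filter_le _ _))
    rw [mem_filter] at hp
    exact (Nat.div_le_iff_le_mul_add_pred (by omega)).2 (by omega)
  have hK : 4 * (K * m) ≤ m * m := by
    rw [← mul_assoc, mul_comm 4]; exact Nat.mul_le_mul_right m (Nat.div_mul_le_self m 4)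
  have := card_properFractions_mul_two m
  rw [mul_add_one] at this
  have := card_properFractions_le_sum m
  rw [← sum_filter_add_sum_filter_not _ fun p => p.1 ≤ K] at this
  omega

lemma Dset_finite (R : ℝ) : (Dset R).Finite := by
  refine (Finset.finite_toSet (Icc (-(⌊R⌋₊ : ℤ)) ⌊R⌋₊ ×ˢ Icc 1 ⌊R⌋₊ |>.image
    fun p : ℤ × ℕ => (p.1 / p.2 : ℚ))).subset fun x hx => ?_
  have hh : ratHeight x ≤ ⌊R⌋₊ := Nat.le_floor hx.2
  refine Rat.mem_image_div_of_abs_num_le_of_den_le ?_ (le_of_max_le_right hh)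
  rw [Int.abs_eq_natAbs]
  exact_mod_cast le_of_max_le_left hh

lemma Rat.num_den_natCast_div_of_coprime {a q : ℕ} (hq : 0 < q) (h : q.Coprime a) :
    ((a / q : ℚ)).num = a ∧ ((a / q : ℚ)).den = q := by
  have hq' : (0 : ℤ) < q := by exact_mod_cast hq
  have h' : Nat.Coprime (a : ℤ).natAbs (q : ℤ).natAbs := h.symm
  refine ⟨?_, ?_⟩
  · simpa only [Int.cast_natCast] using Rat.num_div_eq_of_coprime hq' h'
  · simpa only [Int.cast_natCast, Nat.cast_inj] using Rat.den_div_eq_of_coprime hq' h'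

lemma card_reducedFractions_le_card_Dset {R : ℝ} {m : ℕ} (hm : (m : ℝ) ≤ R) :
    #(reducedFractions m) ≤ Nat.card (Dset R) := by
  have hnum_den : ∀ p ∈ reducedFractions m,
      ((p.2 / p.1 : ℚ)).num = p.2 ∧ ((p.2 / p.1 : ℚ)).den = p.1 ∧ p.2 ≤ p.1 ∧ p.1 ≤ m := by
    intro p hp
    simp only [reducedFractions, mem_filter, mem_properFractions, mem_Icc] at hp
    exact ⟨(Rat.num_den_natCast_div_of_coprime (by omega) hp.2).1,
      (Rat.num_den_natCast_div_of_coprime (by omega) hp.2).2, hp.1.2.2, hp.1.1.2⟩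
  rw [← Set.ncard_coe_finset, ← Nat.card_coe_set_eq]
  refine Set.ncard_le_ncard_of_injOn (fun p => (p.2 / p.1 : ℚ)) (fun p hp => ?_)
    (fun p hp p' hp' h => ?_) (Dset_finite R)
  · obtain ⟨hn, hd, hle, hm'⟩ := hnum_den p hp
    refine ⟨?_, ?_⟩
    · rw [abs_of_nonneg (by positivity)]
      exact (div_le_one_of_le₀ (by exact_mod_cast hle) (by positivity)).trans (by norm_num)
    · rw [ratHeight, hn, hd, Int.natAbs_natCast, max_eq_right hle]
      exact (Nat.cast_le.2 hm').trans hm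
  · obtain ⟨hn, hd, -⟩ := hnum_den p hp
    obtain ⟨hn', hd', -⟩ := hnum_den p' hp'
    simp only at h
    rw [h, hn'] at hn
    rw [h, hd'] at hd
    exact Prod.ext hd.symm (by exact_mod_cast hn.symm)

lemma sq_div_le_card_Dset {R : ℝ} (hR : 2 ≤ R) : R ^ 2 / 48 ≤ Nat.card (Dset R) := by
  set m := ⌊R⌋₊
  have hm : R / 2 ≤ m := by linarith [Nat.lt_floor_add_one R]
  have hcount : ((m * m : ℕ) : ℝ) ≤ 12 * Nat.card (Dset R) := by
    exact_mod_cast (mul_self_le_twelve_mul_card_reducedFractions m).trans <|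
      Nat.mul_le_mul_left 12 (card_reducedFractions_le_card_Dset (Nat.floor_le (by linarith)))
  push_cast at hcount
  nlinarith

/-- Main theorem for `K = ℚ`: the number of trisection numbers of height at most `R` in
`[-2, 2] ∩ ℚ` is `O(R^(-4/3))` times the number of elements of `[-2, 2] ∩ ℚ` of height
at most `R`. -/
theorem density_of_trisection_numbers_rat :
    ∃ (C : ℝ), 0 < C ∧ ∃ (R₀ : ℝ), 1 ≤ R₀ ∧
      ∀ R : ℝ, R₀ ≤ R →
        (Nat.card (Nset R) : ℝ) ≤ C * R ^ (-(4 : ℝ) / 3) * Nat.card (Dset R) := by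
  refine ⟨240, by norm_num, 2, by norm_num, fun R hR => ?_⟩
  have hR0 : 0 < R := by linarith
  have hpow : R ^ (2 / 3 : ℝ) = R ^ (-(4 : ℝ) / 3) * R ^ 2 := by
    rw [← Real.rpow_natCast, ← Real.rpow_add hR0]
    norm_num
  calc (Nat.card (Nset R) : ℝ) ≤ 5 * R ^ (2 / 3 : ℝ) := card_Nset_le (by linarith)
    _ = 240 * R ^ (-(4 : ℝ) / 3) * (R ^ 2 / 48) := by rw [hpow]; ring
    _ ≤ 240 * R ^ (-(4 : ℝ) / 3) * Nat.card (Dset R) := by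
      gcongr
      exact sq_div_le_card_Dset hR
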